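/- Let C be an idempotent complete additive category with direct sums and enough compact objects. If A ∈ C has a local endomorphism ring, then A has the (full, infinite) exchange property: for every split monomorphism u : A → ⊕_{i∈I} B_i there exist decompositions B_i = C_i ⊕ D_i such that ⊕_{i∈I} B_i = A ⊕ (⊕_{i∈I} C_i) via u and the inclusions of the C_i. -/

import Mathlib

open CategoryTheory CategoryTheory.Limits

universe w v u

variable {C : Type u} [Category.{v} C] [Preadditive C] [HasBinaryBiproducts C]
  [HasCoproducts.{w} C]

/-- An object `K` is compact if every morphism from `K` into a direct sum factors through
the inclusion of a finite subsum. -/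
def IsCompactObj (K : C) : Prop :=
  ∀ {ι : Type w} (A : ι → C) (f : K ⟶ ∐ A),
    ∃ (J : Finset ι) (g : K ⟶ ∐ (fun j : J => A j.1)),
      f = g ≫ Sigma.desc (fun j : J => Sigma.ι A j.1)

/-- `C` has enough compact objects: every nonzero object receives a nonzero morphism from
some compact object. -/
def EnoughCompacts : Prop :=
  ∀ B : C, ¬ IsZero B → ∃ (K : C) (f : K ⟶ B), IsCompactObj K ∧ f ≠ 0

/-!
Pick a compact `K` with a nonzero `t : K ⟶ A`. Then `t ≫ u` factors through a finite subsum
`⊕_{j ∈ J} B j`, so `t ≫ σ = t` for `σ = ∑_{j ∈ J} u ≫ π_j ≫ ι_j ≫ retraction u`. In the local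
ring `End A`, were `σ` a non-unit, `1 - σ` would be a unit killing `t`; so `σ`, and hence one of
its summands, is a unit: `u ≫ π_k : A ⟶ B k` is a split mono for a single `k`. Exchanging `A`
against this one summand is a finite computation: with a retraction `q` of `u` factoring through
`π_k`, split the idempotents `𝟙 - ι_i ≫ q ≫ u ≫ π_i` of the `B i` (the identity for `i ≠ k`).
-/

omit [HasBinaryBiproducts C] [HasCoproducts.{w} C] in
theorem isUnit_of_comp_eq_self {A K : C} [IsLocalRing (End A)] {t : K ⟶ A} (ht : t ≠ 0)
    {σ : End A} (h : t ≫ σ = t) : IsUnit σ := by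
  refine (IsLocalRing.isUnit_or_isUnit_of_add_one (add_sub_cancel σ 1)).resolve_right
    fun ⟨w, hw⟩ => ht ?_
  have htw : t ≫ (w : End A) = 0 := by
    rw [hw, End.one_def]
    exact (Preadditive.comp_sub _ _ _).trans (by rw [h, Category.comp_id, sub_self])
  calc t = t ≫ (w : End A) ≫ (w⁻¹ : (End A)ˣ).val := by
        rw [← End.mul_def, Units.inv_mul]; exact (Category.comp_id t).symm
    _ = 0 := by rw [← Category.assoc, htw, zero_comp]

omit [Preadditive C] [HasBinaryBiproducts C] [HasCoproducts.{w} C] in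
theorem isSplitMono_of_isUnit_comp {A X : C} {f : A ⟶ X} {g : X ⟶ A}
    (h : IsUnit (M := End A) (f ≫ g)) : IsSplitMono f := by
  obtain ⟨w, hw⟩ := h
  refine IsSplitMono.mk' ⟨g ≫ (w⁻¹ : (End A)ˣ).val, ?_⟩
  rw [← Category.assoc, ← End.mul_def, ← hw, Units.inv_mul]
  rfl

omit [HasBinaryBiproducts C] in
theorem IsCompactObj.exists_finset_comp_sum_π_ι {K : C} (hK : IsCompactObj.{w} K) {ι : Type w}
    [DecidableEq ι] (B : ι → C) (f : K ⟶ ∐ B) :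
    ∃ J : Finset ι, f ≫ ∑ j ∈ J, Sigma.π B j ≫ Sigma.ι B j = f := by
  obtain ⟨J, g, rfl⟩ := hK B f
  refine ⟨J, ?_⟩
  rw [Category.assoc]
  congr 1
  ext ⟨j, hj⟩
  rw [Sigma.ι_desc_assoc, Preadditive.comp_sum, Finset.sum_eq_single_of_mem j hj
    fun i _ hij => (Sigma.ι_π_of_ne_assoc B hij.symm _).trans zero_comp,
    Sigma.ι_π_eq_id_assoc, Sigma.ι_desc]

omit [HasBinaryBiproducts C] in
theorem exists_isSplitMono_comp_π (hC : EnoughCompacts (C := C)) {A : C} [IsLocalRing (End A)]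
    {ι : Type w} [DecidableEq ι] (B : ι → C) (u : A ⟶ ∐ B) [IsSplitMono u] :
    ∃ k, IsSplitMono (u ≫ Sigma.π B k) := by
  have hA : ¬IsZero A := fun h => one_ne_zero (α := End A) ((IsZero.iff_id_eq_zero A).mp h)
  obtain ⟨K, t, hK, ht⟩ := hC A hA
  obtain ⟨J, hJ⟩ := hK.exists_finset_comp_sum_π_ι B (t ≫ u)
  have hunit : IsUnit (M := End A) (u ≫ (∑ j ∈ J, Sigma.π B j ≫ Sigma.ι B j) ≫ retraction u) :=
    isUnit_of_comp_eq_self ht (by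
      rw [← Category.assoc, ← Category.assoc, hJ, Category.assoc, IsSplitMono.id,
        Category.comp_id])
  rw [Preadditive.sum_comp, Preadditive.comp_sum] at hunit
  obtain ⟨k, -, hk⟩ := IsLocalRing.exists_of_isUnit_sum hunit
  exact ⟨k, isSplitMono_of_isUnit_comp (by simpa only [Category.assoc] using hk)⟩

omit [HasCoproducts.{w} C] in
/-- With `P = 𝟙` this is the usual complement of a split mono; a `P` with `P ≫ q = q` allows the
complementary idempotent to be chosen diagonal on a coproduct. -/
theorem isIso_biprod_desc_of_comp_eq_id_sub {A X Y : C} {u : A ⟶ X} {q : X ⟶ A} {P : X ⟶ X}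
    {c : Y ⟶ X} {s : X ⟶ Y} (huq : u ≫ q = 𝟙 A) (hPq : P ≫ q = q) (hcs : c ≫ s = 𝟙 Y)
    (hsc : s ≫ c = 𝟙 X - q ≫ u ≫ P) : IsIso (biprod.desc u c) := by
  have hcq : c ≫ q = 0 := by
    calc c ≫ q = c ≫ (s ≫ c) ≫ q := by rw [Category.assoc, reassoc_of% hcs]
      _ = 0 := by
        rw [hsc, Preadditive.sub_comp, Category.assoc, Category.assoc, hPq, huq,
          Category.comp_id, Category.id_comp, sub_self, comp_zero]
  refine ⟨biprod.lift q ((𝟙 X - q ≫ u) ≫ s), ?_, ?_⟩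
  · ext <;> simp [huq, hcq, hcs, reassoc_of% huq, reassoc_of% hcq]
  · rw [biprod.lift_desc, Category.assoc, hsc]
    simp [Preadditive.sub_comp, Preadditive.comp_sub, reassoc_of% huq]

omit [HasCoproducts.{w} C] in
theorem exists_isIso_biprod_desc_of_idem [IsIdempotentComplete C] {X : C} (e : X ⟶ X)
    (he : e ≫ e = e) : ∃ (Y Z : C) (c : Y ⟶ X) (s : X ⟶ Y) (d : Z ⟶ X),
      c ≫ s = 𝟙 Y ∧ s ≫ c = e ∧ IsIso (biprod.desc c d) := by
  obtain ⟨Y, c, s, hcs, hsc⟩ := IsIdempotentComplete.idempotents_split X e he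
  obtain ⟨Z, d, t, hdt, htd⟩ := IsIdempotentComplete.idempotents_split X (𝟙 X - e)
    (by simp [Preadditive.sub_comp, Preadditive.comp_sub, he])
  refine ⟨Y, Z, c, s, d, hcs, hsc, isIso_biprod_desc_of_comp_eq_id_sub (P := 𝟙 X) hcs
    (Category.id_comp s) hdt ?_⟩
  rw [Category.comp_id, hsc, htd]

theorem exists_exchange_of_isSplitMono_comp_π [IsIdempotentComplete C] {A : C} {ι : Type w}
    [DecidableEq ι] {B : ι → C} (u : A ⟶ ∐ B) (k : ι) [IsSplitMono (u ≫ Sigma.π B k)] :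
    ∃ (Cc Dd : ι → C) (v : ∀ i, Cc i ⟶ B i) (w : ∀ i, Dd i ⟶ B i),
      (∀ i, IsIso (biprod.desc (v i) (w i))) ∧
      IsIso (biprod.desc u (Sigma.desc (fun i => v i ≫ Sigma.ι B i))) := by
  set q := Sigma.π B k ≫ retraction (u ≫ Sigma.π B k)
  set P := Sigma.π B k ≫ Sigma.ι B k
  have huq : u ≫ q = 𝟙 A := (Category.assoc _ _ _).symm.trans (IsSplitMono.id _)
  have hPq : P ≫ q = q := by simp [P, q]
  set e : ∀ i, B i ⟶ B i := fun i => 𝟙 (B i) - Sigma.ι B i ≫ q ≫ u ≫ Sigma.π B i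
  have hmap : Limits.Sigma.map e = 𝟙 (∐ B) - q ≫ u ≫ P := by
    ext i
    simp only [Sigma.ι_map, e, Preadditive.sub_comp, Preadditive.comp_sub, Category.id_comp,
      Category.comp_id, Category.assoc]
    congr 1
    by_cases hik : i = k
    · subst hik; rfl
    · simp [q, Sigma.ι_π_of_ne_assoc _ hik]
  have hidem : Limits.Sigma.map e ≫ Limits.Sigma.map e = Limits.Sigma.map e := by
    rw [hmap]
    simp [Preadditive.sub_comp, Preadditive.comp_sub, reassoc_of% hPq, reassoc_of% huq]
  have he : ∀ i, e i ≫ e i = e i := fun i =>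
    (cancel_mono (Sigma.ι B i)).mp (by simpa using congrArg (Sigma.ι B i ≫ ·) hidem)
  choose Cc Dd c s d hcs hsc hiso using fun i => exists_isIso_biprod_desc_of_idem (e i) (he i)
  refine ⟨Cc, Dd, c, d, hiso,
    isIso_biprod_desc_of_comp_eq_id_sub (s := Limits.Sigma.map s) huq hPq ?_ ?_⟩
  · ext i
    simp [reassoc_of% hcs]
  · rw [← hmap]
    ext i
    simp [reassoc_of% hsc]

/-- In an idempotent complete additive category with direct sums and enough compact
objects, an object `A` with local endomorphism ring has the full (infinite) exchange
property: for every split monomorphism `u : A ⟶ ⊕_{i ∈ I} B i` there are decompositions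
`B i = C i ⊕ D i` with `⊕_i B i = A ⊕ (⊕_i C i)` via `u` and the inclusions of the `C i`. -/
theorem stmt_15 [IsIdempotentComplete C] (hC : EnoughCompacts (C := C))
    (A : C) (hloc : IsLocalRing (End A)) {ι : Type w} (B : ι → C)
    (u : A ⟶ ∐ B) (hu : IsSplitMono u) :
    ∃ (Cc Dd : ι → C) (v : ∀ i, Cc i ⟶ B i) (w : ∀ i, Dd i ⟶ B i),
      (∀ i, IsIso (biprod.desc (v i) (w i))) ∧
      IsIso (biprod.desc u (Sigma.desc (fun i => v i ≫ Sigma.ι B i))) := by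
  classical
  obtain ⟨k, hk⟩ := exists_isSplitMono_comp_π hC B u
  exact exists_exchange_of_isSplitMono_comp_π u k
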